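/- arXiv:1905.01208 — 3 statements merged into one kernel-verified Lean document; each statement's English description precedes it below -/
import Mathlib

section
/- Let f be a polynomial of degree at most r. Then there exist a_1,…,a_{r+1}, b_1,…,b_{r+1} ∈ ℝ such that f(x) = ∑_{ℓ=1}^{r+1} a_ℓ · [ϱ_r(x - b_ℓ) + (-1)^r ϱ_r(-(x - b_ℓ))] for all x ∈ ℝ, where ϱ_r(x) = (max(x,0))^r. In particular, ϱ_r can represent any polynomial of degree at most r with 2(r+1) terms. -/
lemma relu_pow_id (r : ℕ) (hr : 1 ≤ r) (y : ℝ) :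
    max y 0 ^ r + (-1 : ℝ) ^ r * max (-y) 0 ^ r = y ^ r := by
  rcases le_or_gt 0 y with h | h
  · rw [max_eq_left h, max_eq_right (by linarith), zero_pow (by omega)]
    ring
  · rw [max_eq_right h.le, max_eq_left (by linarith), zero_pow (by omega)]
    rw [← neg_pow, neg_neg]
    ring

/-- Any polynomial of degree at most `r` can be written as
`∑_{ℓ=1}^{r+1} a_ℓ [ϱ_r(x - b_ℓ) + (-1)^r ϱ_r(-(x - b_ℓ))]` with `ϱ_r(x) = (max(x,0))^r`;
in particular `ϱ_r` represents any such polynomial with `2(r+1)` terms. -/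
theorem reluPow_represents_polynomials (r : ℕ) (hr : 1 ≤ r) (p : Polynomial ℝ)
    (hp : p.natDegree ≤ r) :
    ∃ a b : Fin (r + 1) → ℝ, ∀ x : ℝ,
      p.eval x = ∑ ℓ, a ℓ *
        ((max (x - b ℓ) 0) ^ r + (-1 : ℝ) ^ r * (max (-(x - b ℓ)) 0) ^ r) := by
  set M : Matrix (Fin (r + 1)) (Fin (r + 1)) ℝ :=
    fun k ℓ => (r.choose k : ℝ) * (-(ℓ : ℝ)) ^ (r - (k : ℕ)) with hM
  have hMdec : M = Matrix.diagonal (fun k : Fin (r+1) => (r.choose k : ℝ)) *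
      (((Matrix.vandermonde (fun ℓ : Fin (r+1) => -(ℓ : ℝ))).transpose).submatrix
        (Fin.revPerm : Equiv.Perm (Fin (r+1))) id) := by
    ext k ℓ
    simp [Matrix.mul_apply, Matrix.diagonal_apply, Matrix.vandermonde, hM,
      Fin.val_rev, Finset.sum_ite_eq]
  have hdet : M.det ≠ 0 := by
    rw [hMdec, Matrix.det_mul, Matrix.det_diagonal]
    have h1 : ∀ k : Fin (r+1), (r.choose k : ℝ) ≠ 0 := by
      intro k
      have := Nat.choose_pos (by omega : (k : ℕ) ≤ r)
      positivity
    have h2 : (((Matrix.vandermonde (fun ℓ : Fin (r+1) => -(ℓ : ℝ))).transpose).submatrix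
        (Fin.revPerm : Equiv.Perm (Fin (r+1))) id).det ≠ 0 := by
      rw [Matrix.det_permute, Matrix.det_transpose]
      have hv : (Matrix.vandermonde (fun ℓ : Fin (r+1) => -(ℓ : ℝ))).det ≠ 0 := by
        rw [Matrix.det_vandermonde_ne_zero_iff]
        intro i j hij
        have : (i : ℝ) = j := neg_injective hij
        exact Fin.ext (by exact_mod_cast this)
      apply mul_ne_zero _ hv
      rcases Int.units_eq_one_or (Equiv.Perm.sign (Fin.revPerm : Equiv.Perm (Fin (r+1)))) with h | h <;>
        simp [h]
    exact mul_ne_zero (Finset.prod_ne_zero_iff.mpr (fun k _ => h1 k)) h2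
  set c : Fin (r + 1) → ℝ := fun k => p.coeff k with hc
  refine ⟨M⁻¹.mulVec c, fun ℓ => (ℓ : ℝ), fun x => ?_⟩
  have hMc : M.mulVec (M⁻¹.mulVec c) = c := by
    rw [Matrix.mulVec_mulVec, Matrix.mul_nonsing_inv _ (isUnit_iff_ne_zero.mpr hdet),
      Matrix.one_mulVec]
  -- rewrite the summand via the relu identity and the binomial theorem
  have key : ∀ ℓ : Fin (r+1),
      ((max (x - (ℓ:ℝ)) 0) ^ r + (-1 : ℝ) ^ r * (max (-(x - (ℓ:ℝ))) 0) ^ r)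
        = ∑ k : Fin (r+1), M k ℓ * x ^ (k : ℕ) := by
    intro ℓ
    rw [relu_pow_id r hr]
    have hb : (x - (ℓ:ℝ)) ^ r = (x + (-(ℓ:ℝ))) ^ r := by ring_nf
    rw [hb, add_pow]
    rw [Finset.sum_congr rfl (fun k hk => by
      rw [mul_comm (x ^ k), mul_assoc])]
    rw [← Fin.sum_univ_eq_sum_range (fun k => (-(ℓ:ℝ)) ^ (r - k) * (x ^ k * (r.choose k : ℝ)))]
    apply Finset.sum_congr rfl
    intro k _
    simp only [hM]
    ring
  calc p.eval x = ∑ k : Fin (r+1), c k * x ^ (k : ℕ) := by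
        rw [Polynomial.eval_eq_sum_range' (by omega : p.natDegree < r + 1),
          ← Fin.sum_univ_eq_sum_range (fun k => p.coeff k * x ^ k)]
    _ = ∑ k : Fin (r+1), (∑ ℓ, M k ℓ * (M⁻¹.mulVec c) ℓ) * x ^ (k : ℕ) := by
        apply Finset.sum_congr rfl
        intro k _
        congr 1
        calc c k = M.mulVec (M⁻¹.mulVec c) k := by rw [hMc]
          _ = ∑ ℓ, M k ℓ * (M⁻¹.mulVec c) ℓ := by
              simp [Matrix.mulVec, dotProduct]
    _ = ∑ ℓ, (M⁻¹.mulVec c) ℓ * ∑ k : Fin (r+1), M k ℓ * x ^ (k : ℕ) := by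
        simp_rw [Finset.sum_mul]
        rw [Finset.sum_comm]
        apply Finset.sum_congr rfl
        intro ℓ _
        rw [Finset.mul_sum]
        apply Finset.sum_congr rfl
        intro k _
        ring
    _ = ∑ ℓ, (M⁻¹.mulVec c) ℓ *
        ((max (x - (ℓ:ℝ)) 0) ^ r + (-1 : ℝ) ^ r * (max (-(x - (ℓ:ℝ))) 0) ^ r) := by
        apply Finset.sum_congr rfl
        intro ℓ _
        rw [key ℓ]
end

section
/- For n ∈ ℕ₀, the B-spline of degree n satisfies β₊^{(n)} = (1/n!) ∑_{k=0}^{n+1} binom(n+1,k) (-1)^k ϱ_n(· - k), where ϱ_n(x) = (max(x,0))^n for n ≥ 1 and ϱ_0 = 1_{[0,∞)}, and β₊^{(n)} is the (n+1)-fold convolution of the indicator 1_{[0,1)} with itself. -/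
/-!
Writing `∇f(x) = f(x) - f(x - 1)`, the recursion is `β^{(n+1)}(x) = ∫_{x-1}^x β^{(n)}`, and `∇`
commutes with taking primitives. Since `ϱ_{n+1} / (n+1)` is a primitive of `ϱ_n`, induction gives
`β^{(n)} = ∇^{n+1} ϱ_n / n!`; expanding `∇^{n+1}` by the binomial theorem gives the sum.
-/

open MeasureTheory

/-- `ϱ_n` for `n ≥ 1` is `x ↦ (max(x,0))^n`; `ϱ₀` is the Heaviside function `1_{[0,∞)}`. -/
noncomputable def rho (n : ℕ) (x : ℝ) : ℝ :=
  if n = 0 then (if 0 ≤ x then 1 else 0) else (max x 0) ^ n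

/-- The B-spline of degree `n`: the `(n+1)`-fold convolution of `1_{[0,1)}` with itself. -/
noncomputable def bspline : ℕ → ℝ → ℝ
  | 0 => fun x => if x ∈ Set.Ico (0:ℝ) 1 then 1 else 0
  | (n+1) => fun x => ∫ t : ℝ, bspline n t * (if (x - t) ∈ Set.Ico (0:ℝ) 1 then 1 else 0)

open Finset
open scoped Nat

section BackwardDifference

variable {E : Type*}

def bwdDiff [AddCommGroup E] (f : ℝ → E) (x : ℝ) : E := f x - f (x - 1)

lemma bwdDiff_iter_eq_fwdDiff_iter [AddCommGroup E] (f : ℝ → E) (m : ℕ) (x : ℝ) :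
    bwdDiff^[m] f x = (fwdDiff 1)^[m] f (x - m) := by
  induction m generalizing x with
  | zero => simp
  | succ m ih =>
    rw [Function.iterate_succ_apply', Function.iterate_succ_apply', bwdDiff, fwdDiff, ih, ih]
    push_cast
    ring_nf

lemma bwdDiff_iter_eq_sum [AddCommGroup E] (f : ℝ → E) (m : ℕ) (x : ℝ) :
    bwdDiff^[m] f x = ∑ k ∈ range (m + 1), ((-1 : ℤ) ^ k * m.choose k) • f (x - k) := by
  rw [bwdDiff_iter_eq_fwdDiff_iter, fwdDiff_iter_eq_sum_shift, ← sum_range_reflect]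
  refine sum_congr rfl fun k hk => ?_
  have hkm : k ≤ m := Nat.le_of_lt_succ (mem_range.mp hk)
  rw [Nat.add_sub_cancel, Nat.sub_sub_self hkm, Nat.choose_symm hkm, nsmul_one,
    Nat.cast_sub hkm]
  ring_nf

lemma bwdDiff_iter_const_smul [AddCommGroup E] [Module ℝ E] (c : ℝ) (f : ℝ → E) (m : ℕ) :
    bwdDiff^[m] (c • f) = c • bwdDiff^[m] f := by
  induction m with
  | zero => rfl
  | succ m ih =>
    ext x
    simp only [Function.iterate_succ_apply', ih, bwdDiff, Pi.smul_apply, smul_sub]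

variable [NormedAddCommGroup E] {g G : ℝ → E}

lemma intervalIntegrable_bwdDiff_iter (hg : ∀ a b, IntervalIntegrable g volume a b) (m : ℕ)
    (a b : ℝ) : IntervalIntegrable (bwdDiff^[m] g) volume a b := by
  induction m generalizing a b with
  | zero => exact hg a b
  | succ m ih =>
    rw [Function.iterate_succ']
    refine (ih a b).sub ?_
    simpa using (ih (a - 1) (b - 1)).comp_sub_right 1

lemma integral_bwdDiff_iter [NormedSpace ℝ E] (hg : ∀ a b, IntervalIntegrable g volume a b)
    (hG : ∀ a b, ∫ t in a..b, g t = G b - G a) (m : ℕ) (a b : ℝ) :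
    ∫ t in a..b, bwdDiff^[m] g t = bwdDiff^[m] G b - bwdDiff^[m] G a := by
  induction m generalizing a b with
  | zero => exact hG a b
  | succ m ih =>
    simp only [Function.iterate_succ_apply', bwdDiff]
    rw [intervalIntegral.integral_sub (intervalIntegrable_bwdDiff_iter hg m a b)
      (by simpa using (intervalIntegrable_bwdDiff_iter hg m (a - 1) (b - 1)).comp_sub_right 1),
      intervalIntegral.integral_comp_sub_right (fun t => bwdDiff^[m] g t), ih, ih]
    abel

lemma bwdDiff_iter_succ_eq_integral [NormedSpace ℝ E]
    (hg : ∀ a b, IntervalIntegrable g volume a b) (hG : ∀ a b, ∫ t in a..b, g t = G b - G a)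
    (m : ℕ) (x : ℝ) : bwdDiff^[m + 1] G x = ∫ t in x - 1..x, bwdDiff^[m] g t := by
  rw [integral_bwdDiff_iter hg hG, Function.iterate_succ_apply', bwdDiff]

end BackwardDifference

section TruncatedPower

lemma rho_of_nonneg (n : ℕ) {x : ℝ} (hx : 0 ≤ x) : rho n x = x ^ n := by
  rcases eq_or_ne n 0 with rfl | hn
  · simp [rho, hx]
  · simp [rho, hn, hx]

lemma rho_of_neg (n : ℕ) {x : ℝ} (hx : x < 0) : rho n x = 0 := by
  rcases eq_or_ne n 0 with rfl | hn
  · simp [rho, hx]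
  · simp [rho, hn, hx.le]

lemma rho_succ (n : ℕ) : rho (n + 1) = fun x => max x 0 ^ (n + 1) := by
  ext x
  simp [rho]

lemma monotone_rho (n : ℕ) : Monotone (rho n) := by
  intro a b hab
  rcases lt_or_ge a 0 with ha | ha
  · rw [rho_of_neg n ha]
    rcases lt_or_ge b 0 with hb | hb
    · rw [rho_of_neg n hb]
    · rw [rho_of_nonneg n hb]
      positivity
  · rw [rho_of_nonneg n ha, rho_of_nonneg n (ha.trans hab)]
    exact pow_le_pow_left₀ ha hab n

-- `rho n` jumps at `0` when `n = 0`, so only the right derivative is available in general.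
lemma hasDerivWithinAt_rho_succ (n : ℕ) (x : ℝ) :
    HasDerivWithinAt (rho (n + 1)) ((n + 1) * rho n x) (Set.Ici x) x := by
  rcases lt_or_ge x 0 with hx | hx
  · have hzero : rho (n + 1) =ᶠ[nhds x] fun _ => 0 :=
      Filter.eventually_of_mem (Iio_mem_nhds hx) fun y hy => rho_of_neg _ hy
    rw [rho_of_neg n hx, mul_zero]
    exact ((hasDerivAt_const x 0).congr_of_eventuallyEq hzero).hasDerivWithinAt
  · have hpow : HasDerivAt (fun y : ℝ => y ^ (n + 1)) ((n + 1) * x ^ n) x := by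
      simpa using hasDerivAt_pow (n + 1) x
    rw [rho_of_nonneg n hx]
    exact hpow.hasDerivWithinAt.congr (fun y hy => rho_of_nonneg _ (hx.trans hy))
      (rho_of_nonneg _ hx)

lemma integral_rho (n : ℕ) (a b : ℝ) :
    ∫ t in a..b, rho n t = (rho (n + 1) b - rho (n + 1) a) / (n + 1) := by
  have hcont : Continuous (rho (n + 1)) := by
    rw [rho_succ]
    fun_prop
  rw [eq_div_iff (by positivity), mul_comm, ← intervalIntegral.integral_const_mul]
  exact intervalIntegral.integral_eq_sub_of_hasDeriv_right hcont.continuousOn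
    (fun x _ => (hasDerivWithinAt_rho_succ n x).mono Set.Ioi_subset_Ici_self)
    ((monotone_rho n).intervalIntegrable.const_mul _)

end TruncatedPower

lemma bspline_succ (n : ℕ) (x : ℝ) : bspline (n + 1) x = ∫ t in x - 1..x, bspline n t := by
  have hwindow : (fun t => bspline n t * if x - t ∈ Set.Ico (0 : ℝ) 1 then 1 else 0)
      = Set.indicator (Set.Ioc (x - 1) x) (bspline n) := by
    ext t
    by_cases ht : t ∈ Set.Ioc (x - 1) x
    · rw [Set.indicator_of_mem ht, if_pos ⟨by linarith [ht.2], by linarith [ht.1]⟩, mul_one]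
    · rw [Set.indicator_of_notMem ht, if_neg fun h => ht ⟨by linarith [h.2], by linarith [h.1]⟩,
        mul_zero]
  rw [bspline]
  beta_reduce
  rw [hwindow, integral_indicator measurableSet_Ioc,
    intervalIntegral.integral_of_le (by linarith)]

theorem bspline_eq_bwdDiff_iter (n : ℕ) : bspline n = (n ! : ℝ)⁻¹ • bwdDiff^[n + 1] (rho n) := by
  induction n with
  | zero =>
    ext x
    simp only [zero_add, Function.iterate_one, Nat.factorial_zero, Nat.cast_one, inv_one,
      one_smul, bwdDiff, bspline, rho, if_true, Set.mem_Ico]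
    split_ifs <;> grind
  | succ n ih =>
    have hG : ∀ a b, ∫ t in a..b, rho n t
        = ((n + 1 : ℝ)⁻¹ • rho (n + 1)) b - ((n + 1 : ℝ)⁻¹ • rho (n + 1)) a := by
      intro a b
      rw [integral_rho, Pi.smul_apply, Pi.smul_apply, smul_eq_mul, smul_eq_mul]
      ring
    ext x
    calc bspline (n + 1) x = (n ! : ℝ)⁻¹ * ∫ t in x - 1..x, bwdDiff^[n + 1] (rho n) t := by
          simp only [bspline_succ, ih, Pi.smul_apply, smul_eq_mul,
            intervalIntegral.integral_const_mul]
      _ = (n ! : ℝ)⁻¹ * ((n + 1 : ℝ)⁻¹ * bwdDiff^[n + 2] (rho (n + 1)) x) := by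
          rw [← bwdDiff_iter_succ_eq_integral (fun _ _ => (monotone_rho n).intervalIntegrable) hG,
            bwdDiff_iter_const_smul, Pi.smul_apply, smul_eq_mul]
      _ = ((n + 1)! : ℝ)⁻¹ * bwdDiff^[n + 2] (rho (n + 1)) x := by
          rw [Nat.factorial_succ, Nat.cast_mul, mul_inv]
          push_cast
          ring

/-- `β₊^{(n)} = (1/n!) ∑_{k=0}^{n+1} C(n+1,k) (-1)^k ϱ_n(· - k)`. -/
theorem bspline_eq_sum (n : ℕ) (x : ℝ) :
    bspline n x = ((n.factorial : ℝ))⁻¹ *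
      ∑ k ∈ Finset.range (n + 2), (-1 : ℝ) ^ k * ((n+1).choose k : ℝ) * rho n (x - k) := by
  rw [bspline_eq_bwdDiff_iter, Pi.smul_apply, bwdDiff_iter_eq_sum, smul_eq_mul]
  simp only [zsmul_eq_mul]
  push_cast
  rfl
end

section
/- Let σ satisfy the squashing property (σ = 0 on (-∞,0], σ = 1 on [1,∞), 0 ≤ σ ≤ 1), let 0 < ε < 1/2, let t(x) := σ(x/ε) - σ(1+(x-1)/ε), and define h : ℝ^d → ℝ by h(x) := σ(1 + ∑_{i=1}^d t(x_i) - d). Then 0 ≤ h ≤ 1, h(x) = 1 for x ∈ [ε,1-ε]^d, h(x) = 0 for x ∉ [0,1]^d, and hence |h(x) - 1_{[0,1]^d}(x)| ≤ 1_{[0,1]^d \ [ε,1-ε]^d}(x) for all x ∈ ℝ^d. -/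
/-- With `σ` a squashing function, `0 < ε < 1/2`, `t(x) = σ(x/ε) - σ(1+(x-1)/ε)` and
`h(x) = σ(1 + ∑ᵢ t(xᵢ) - d)`, one has `0 ≤ h ≤ 1`, `h = 1` on `[ε,1-ε]^d`, `h = 0` outside
`[0,1]^d`, and `|h(x) - 1_{[0,1]^d}(x)| ≤ 1_{[0,1]^d \ [ε,1-ε]^d}(x)` for all `x ∈ ℝ^d`. -/
theorem squash_bump_multidim (d : ℕ) (σ : ℝ → ℝ)
    (h0 : ∀ x : ℝ, x ≤ 0 → σ x = 0) (h1 : ∀ x : ℝ, 1 ≤ x → σ x = 1)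
    (hb : ∀ x : ℝ, 0 ≤ σ x ∧ σ x ≤ 1)
    (ε : ℝ) (hε : 0 < ε) (hε' : ε < 1/2)
    (t : ℝ → ℝ) (ht : ∀ x, t x = σ (x / ε) - σ (1 + (x - 1) / ε))
    (h : (Fin d → ℝ) → ℝ) (hh : ∀ x, h x = σ (1 + ∑ i, t (x i) - d)) :
    (∀ x, 0 ≤ h x ∧ h x ≤ 1) ∧
    (∀ x : Fin d → ℝ, (∀ i, x i ∈ Set.Icc ε (1 - ε)) → h x = 1) ∧
    (∀ x : Fin d → ℝ, (∃ i, x i ∉ Set.Icc (0:ℝ) 1) → h x = 0) ∧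
    (∀ x : Fin d → ℝ,
      |h x - Set.indicator {y : Fin d → ℝ | ∀ i, y i ∈ Set.Icc (0:ℝ) 1} (fun _ => (1:ℝ)) x| ≤
        Set.indicator
          ({y : Fin d → ℝ | ∀ i, y i ∈ Set.Icc (0:ℝ) 1} \
            {y : Fin d → ℝ | ∀ i, y i ∈ Set.Icc ε (1 - ε)}) (fun _ => (1:ℝ)) x) := by
  -- basic properties of t
  have ht_le : ∀ x, t x ≤ 1 := by
    intro x
    rw [ht]
    have := (hb (x / ε)).2
    have := (hb (1 + (x - 1) / ε)).1
    linarith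
  have ht_one : ∀ x, x ∈ Set.Icc ε (1 - ε) → t x = 1 := by
    intro x hx
    obtain ⟨hx1, hx2⟩ := hx
    rw [ht]
    have e1 : σ (x / ε) = 1 := h1 _ ((le_div_iff₀ hε).mpr (by linarith))
    have e2 : σ (1 + (x - 1) / ε) = 0 := by
      apply h0
      have : (x - 1) / ε ≤ -1 := by
        rw [div_le_iff₀ hε]; linarith
      linarith
    rw [e1, e2]; ring
  have ht_zero : ∀ x : ℝ, x ∉ Set.Icc (0:ℝ) 1 → t x = 0 := by
    intro x hx
    rw [Set.mem_Icc, not_and_or, not_le, not_le] at hx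
    rw [ht]
    rcases hx with hx | hx
    · have e1 : σ (x / ε) = 0 := h0 _ (by
        apply le_of_lt; exact div_neg_of_neg_of_pos hx hε)
      have e2 : σ (1 + (x - 1) / ε) = 0 := by
        apply h0
        have : (x - 1) / ε ≤ -1 := by
          rw [div_le_iff₀ hε]; nlinarith
        linarith
      rw [e1, e2]; ring
    · have e1 : σ (x / ε) = 1 := by
        apply h1
        rw [le_div_iff₀ hε]; nlinarith
      have e2 : σ (1 + (x - 1) / ε) = 1 := by
        apply h1
        have : 0 ≤ (x - 1) / ε := div_nonneg (by linarith) hε.le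
        linarith
      rw [e1, e2]; ring
  -- the four parts
  have part1 : ∀ x, 0 ≤ h x ∧ h x ≤ 1 := by
    intro x; rw [hh]; exact hb _
  have part2 : ∀ x : Fin d → ℝ, (∀ i, x i ∈ Set.Icc ε (1 - ε)) → h x = 1 := by
    intro x hx
    rw [hh]
    apply h1
    have : ∑ i, t (x i) = d := by
      rw [Finset.sum_congr rfl (fun i _ => ht_one _ (hx i))]
      simp
    rw [this]; linarith
  have part3 : ∀ x : Fin d → ℝ, (∃ i, x i ∉ Set.Icc (0:ℝ) 1) → h x = 0 := by
    intro x ⟨i, hi⟩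
    rw [hh]
    apply h0
    have hsum : ∑ j, t (x j) ≤ (d : ℝ) - 1 := by
      have : ∑ j, t (x j) ≤ ∑ j, (if j = i then 0 else (1:ℝ)) := by
        apply Finset.sum_le_sum
        intro j _
        by_cases hj : j = i
        · simp [hj, ht_zero _ hi]
        · simp [hj, ht_le]
      refine this.trans (le_of_eq ?_)
      have e : (∑ j : Fin d, if j = i then (0:ℝ) else 1)
          = ∑ j : Fin d, ((1:ℝ) - if j = i then 1 else 0) := by
        apply Finset.sum_congr rfl
        intro j _
        by_cases hj : j = i <;> simp [hj]
      rw [e, Finset.sum_sub_distrib,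
        Finset.sum_ite_eq' Finset.univ i (fun _ => (1:ℝ))]
      simp
    linarith
  refine ⟨part1, part2, part3, ?_⟩
  intro x
  by_cases hA : ∀ i, x i ∈ Set.Icc (0:ℝ) 1
  · by_cases hB : ∀ i, x i ∈ Set.Icc ε (1 - ε)
    · have : h x = 1 := part2 x hB
      rw [this]
      rw [Set.indicator_of_mem (by exact hA)]
      simp
      exact Set.indicator_nonneg (fun _ _ => by norm_num) _
    · rw [Set.indicator_of_mem (by exact hA),
        Set.indicator_of_mem (by exact ⟨hA, hB⟩)]
      have := part1 x
      rw [abs_le]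
      constructor <;> linarith [this.1, this.2]
  · push_neg at hA
    obtain ⟨i, hi⟩ := hA
    rw [part3 x ⟨i, hi⟩]
    rw [Set.indicator_of_notMem (by intro hmem; exact hi (hmem i)),
      Set.indicator_of_notMem (by intro hmem; exact hi (hmem.1 i))]
    simp
end
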